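/- For all i ∈ I one has e_i ∘ f_i − f_i ∘ e_i = h_i. -/

import Mathlib

noncomputable section

variable {E : Type*} [AddCommGroup E] [Module ℚ E]

/-- The Cartan pairing `(β, α^∨) = 2(β,α)/(α,α)`. -/
def pairingB (B : E →ₗ[ℚ] E →ₗ[ℚ] ℚ) (β α : E) : ℚ := 2 * B β α / B α α

/-- A reduced crystallographic root system in a ℚ-vector space with a
positive-definite symmetric bilinear form. -/
structure IsRootSystem (B : E →ₗ[ℚ] E →ₗ[ℚ] ℚ) (Φ : Set E) : Prop where
  finite : Φ.Finite
  ne_zero : ∀ α ∈ Φ, α ≠ 0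
  symm : ∀ x y : E, B x y = B y x
  posdef : ∀ x : E, x ≠ 0 → 0 < B x x
  reduced : ∀ α ∈ Φ, ∀ t : ℚ, t • α ∈ Φ → t = 1 ∨ t = -1
  cryst : ∀ α ∈ Φ, ∀ β ∈ Φ, ∃ n : ℤ, pairingB B β α = n
  reflMem : ∀ α ∈ Φ, ∀ β ∈ Φ, β - pairingB B β α • α ∈ Φ

/-- Irreducibility: no nontrivial orthogonal decomposition of `Φ`. -/
def IsIrreducibleRS (B : E →ₗ[ℚ] E →ₗ[ℚ] ℚ) (Φ : Set E) : Prop :=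
  ∀ s : Set E, s ⊆ Φ → s.Nonempty →
    (∀ α ∈ s, ∀ β ∈ Φ, β ∉ s → B α β = 0) → Φ ⊆ s

/-- `RootChain Φ γ β p q` says that the `γ`-string through `β` is
`β - qγ, ..., β, ..., β + pγ`. -/
def RootChain (Φ : Set E) (γ β : E) (p q : ℕ) : Prop :=
  (∀ k : ℤ, -(q : ℤ) ≤ k → k ≤ (p : ℤ) → β + (k : ℚ) • γ ∈ Φ) ∧
  β - ((q : ℚ) + 1) • γ ∉ Φ ∧ β + ((p : ℚ) + 1) • γ ∉ Φ

/-- A set of simple roots `α_i = a i`, indexed by a finite set `I`. -/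
structure IsBase {I : Type*} [Fintype I] (Φ : Set E) (a : I → E) : Prop where
  mem : ∀ i, a i ∈ Φ
  indep : LinearIndependent ℚ a
  posneg : ∀ β ∈ Φ, (∃ c : I → ℕ, β = ∑ i, (c i : ℚ) • a i) ∨
    (∃ c : I → ℕ, β = -∑ i, (c i : ℚ) • a i)

/-! On `u_j` both composites equal `|(α_i, α_j^∨)| u_i`, and on `v_{±α_i}` the commutator is
`±2 v_{±α_i}` since `±2α_i ∉ Φ`. Every other root `α` has an `α_i`-string
`α - qα_i, …, α + pα_i`; root strings are unbroken, so the strings through `α ± α_i` are the same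
string re-centred, and hence `f_i e_i v_α = p(q+1) v_α` and `e_i f_i v_α = (p+1)q v_α`. Their
difference `q - p` is `(α, α_i^∨)`, because the reflection `s_{α_i}` reverses the string. -/

variable {B : E →ₗ[ℚ] E →ₗ[ℚ] ℚ} {Φ : Set E} {α β γ : E}

lemma pairingB_self (h : B α α ≠ 0) : pairingB B α α = 2 := by
  unfold pairingB; field_simp

lemma pairingB_neg_left : pairingB B (-β) α = -pairingB B β α := by
  simp only [pairingB, map_neg, LinearMap.neg_apply]; ring

lemma pairingB_neg_right : pairingB B β (-α) = -pairingB B β α := by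
  simp only [pairingB, map_neg, LinearMap.neg_apply, neg_neg]; ring

lemma pairingB_add_smul_left (h : B α α ≠ 0) (β : E) (t : ℚ) :
    pairingB B (β + t • α) α = pairingB B β α + 2 * t := by
  simp only [pairingB, map_add, map_smul, LinearMap.add_apply, LinearMap.smul_apply, smul_eq_mul]
  field_simp

lemma pairingB_pos_iff (h : 0 < B α α) : 0 < pairingB B β α ↔ 0 < B β α := by
  rw [pairingB, div_pos_iff_of_pos_right h, mul_pos_iff_of_pos_left two_pos]

namespace IsRootSystem

variable (hRS : IsRootSystem B Φ)
include hRS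

lemma apply_self_pos (hα : α ∈ Φ) : 0 < B α α :=
  hRS.posdef α (hRS.ne_zero α hα)

lemma pairingB_self_eq_two (hα : α ∈ Φ) : pairingB B α α = 2 :=
  pairingB_self (hRS.apply_self_pos hα).ne'

lemma neg_mem (hα : α ∈ Φ) : -α ∈ Φ := by
  simpa [hRS.pairingB_self_eq_two hα, two_smul] using hRS.reflMem α hα α hα

lemma eq_or_eq_neg_of_mem_span (hα : α ∈ Φ) (hβ : β ∈ Φ) (h : β ∈ ℚ ∙ α) :
    β = α ∨ β = -α := by
  obtain ⟨t, rfl⟩ := Submodule.mem_span_singleton.mp h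
  rcases hRS.reduced α hα t hβ with rfl | rfl <;> simp

lemma add_self_notMem (hα : α ∈ Φ) : α + α ∉ Φ := by
  intro h
  rcases hRS.reduced α hα 2 (by rwa [two_smul]) with h2 | h2 <;> norm_num at h2

lemma ne_neg_self (hα : α ∈ Φ) : α ≠ -α := by
  intro h
  have h2 : (2 : ℚ) • α = 0 := by rw [two_smul]; nth_rewrite 2 [h]; exact add_neg_cancel α
  exact hRS.ne_zero α hα ((smul_eq_zero.mp h2).resolve_left two_ne_zero)

lemma pairingB_mul_pairingB_lt_four (hα : α ∈ Φ) (hβ : β ∈ Φ) (h : β ∉ ℚ ∙ α) :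
    pairingB B α β * pairingB B β α < 4 := by
  have hαα := hRS.apply_self_pos hα
  have hββ := hRS.apply_self_pos hβ
  have hcs : B α β ^ 2 < B α α * B β β :=
    (LinearMap.BilinForm.apply_sq_lt_iff_linearIndependent_of_symm B hRS.posdef ⟨hRS.symm⟩ α β).mpr
      ((LinearIndependent.pair_iff' (hRS.ne_zero α hα)).mpr
        fun t ht => h (Submodule.mem_span_singleton.mpr ⟨t, ht⟩))
  rw [pairingB, pairingB, hRS.symm β α, div_mul_div_comm, div_lt_iff₀ (by positivity)]
  nlinarith

lemma sub_mem_of_pos (hα : α ∈ Φ) (hβ : β ∈ Φ) (hne : β ≠ α) (hpos : 0 < B β α) :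
    β - α ∈ Φ := by
  have hspan : β ∉ ℚ ∙ α := by
    intro hmem
    rcases hRS.eq_or_eq_neg_of_mem_span hα hβ hmem with rfl | rfl
    · exact hne rfl
    · simp only [map_neg, LinearMap.neg_apply, Left.neg_pos_iff] at hpos
      exact hpos.not_gt (hRS.apply_self_pos hα)
  obtain ⟨m, hm⟩ := hRS.cryst α hα β hβ
  obtain ⟨n, hn⟩ := hRS.cryst β hβ α hα
  have hm0 : 0 < m := by
    have := (pairingB_pos_iff (hRS.apply_self_pos hα)).mpr hpos
    rw [hm] at this; exact_mod_cast this
  have hn0 : 0 < n := by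
    have := (pairingB_pos_iff (hRS.apply_self_pos hβ)).mpr (by rwa [hRS.symm])
    rw [hn] at this; exact_mod_cast this
  have hnm : n * m < 4 := by
    have := hRS.pairingB_mul_pairingB_lt_four hα hβ hspan
    rw [hm, hn] at this; exact_mod_cast this
  -- `n m < 4` for positive integers, so `s_α β = β - α` or `s_β α = α - β`.
  obtain hm1 | hn1 : m = 1 ∨ n = 1 := by
    by_contra! h
    have : 2 ≤ m := by omega
    have : 2 ≤ n := by omega
    nlinarith
  · simpa [hm, hm1] using hRS.reflMem α hα β hβ
  · simpa [hn, hn1] using hRS.neg_mem (hRS.reflMem β hβ α hα)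

lemma pairingB_nonneg_of_add_notMem (hα : α ∈ Φ) (hβ : β ∈ Φ) (hne : β ≠ -α)
    (h : β + α ∉ Φ) : 0 ≤ pairingB B β α := by
  by_contra! hneg
  have hpos : 0 < B β (-α) :=
    (pairingB_pos_iff (hRS.apply_self_pos (hRS.neg_mem hα))).mp
      (by rw [pairingB_neg_right]; linarith)
  exact h (by simpa using hRS.sub_mem_of_pos (hRS.neg_mem hα) hβ hne hpos)

lemma pairingB_nonpos_of_sub_notMem (hα : α ∈ Φ) (hβ : β ∈ Φ) (hne : β ≠ α)
    (h : β - α ∉ Φ) : pairingB B β α ≤ 0 := by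
  have := hRS.pairingB_nonneg_of_add_notMem (hRS.neg_mem hα) hβ (by rwa [neg_neg])
    (by rwa [← sub_eq_add_neg])
  rw [pairingB_neg_right] at this
  linarith

end IsRootSystem

section SpanSingleton

variable {R N : Type*} [Ring R] [AddCommGroup N] [Module R N] {x y : N}

lemma span_singleton_neg_eq : (R ∙ (-y)) = R ∙ y := by
  rw [← Set.neg_singleton, Submodule.span_neg]

lemma ne_of_notMem_span_singleton (h : x ∉ R ∙ y) : x ≠ y := fun hxy =>
  h (hxy ▸ Submodule.mem_span_singleton_self x)

lemma ne_neg_of_notMem_span_singleton (h : x ∉ R ∙ y) : x ≠ -y := fun hxy =>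
  h (hxy ▸ Submodule.neg_mem _ (Submodule.mem_span_singleton_self y))

lemma add_smul_notMem_span_singleton (h : x ∉ R ∙ y) (t : R) : x + t • y ∉ R ∙ y := by
  rwa [Submodule.add_mem_iff_left _ (Submodule.smul_mem _ t (Submodule.mem_span_singleton_self y))]

end SpanSingleton

namespace RootChain

variable {p q p' q' : ℕ}

lemma mem (hc : RootChain Φ γ β p q) : β ∈ Φ := by
  simpa using hc.1 0 (by omega) (by omega)

lemma neg (hc : RootChain Φ γ β p q) : RootChain Φ (-γ) β q p := by
  obtain ⟨hmem, hbot, htop⟩ := hc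
  refine ⟨fun k hk₁ hk₂ => ?_, ?_, ?_⟩
  · simpa using hmem (-k) (by omega) (by omega)
  · simpa [← sub_eq_add_neg] using htop
  · simpa [sub_eq_add_neg] using hbot

lemma add_step (hc : RootChain Φ γ β (p + 1) q) : RootChain Φ γ (β + γ) p (q + 1) := by
  obtain ⟨hmem, hbot, htop⟩ := hc
  refine ⟨fun k hk₁ hk₂ => ?_, ?_, ?_⟩
  · convert hmem (k + 1) (by omega) (by omega) using 1; push_cast; module
  · convert hbot using 2; push_cast; module
  · convert htop using 2; push_cast; module

variable (hRS : IsRootSystem B Φ) (hγ : γ ∈ Φ) (hβ : β ∉ ℚ ∙ γ)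
include hRS hγ hβ

lemma le_of_mem (hc : RootChain Φ γ β p q) {k : ℤ} (hk : β + (k : ℚ) • γ ∈ Φ) : k ≤ p := by
  have hγγ := (hRS.apply_self_pos hγ).ne'
  -- Otherwise the least `m > p` with `β + mγ ∈ Φ` starts a second segment of the string, and
  -- its bottom forces `(β, γ^∨) + 2m ≤ 0 ≤ (β, γ^∨) + 2p`.
  by_contra! hpk
  obtain ⟨m, ⟨hpm, hm⟩, hleast⟩ := Int.exists_least_of_bdd
    (P := fun m : ℤ => (p : ℤ) < m ∧ β + (m : ℚ) • γ ∈ Φ) ⟨p, fun z hz => hz.1.le⟩ ⟨k, hpk, hk⟩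
  have hm_sub : β + (m : ℚ) • γ - γ ∉ Φ := by
    intro h
    rcases (show m = p + 1 ∨ (p : ℤ) < m - 1 by omega) with rfl | hlt
    · exact hc.2.2 (by convert hm using 1; push_cast; module)
    · have := hleast (m - 1) ⟨hlt, by convert h using 1; push_cast; module⟩
      omega
  have hp_add : β + ((p : ℤ) : ℚ) • γ + γ ∉ Φ := by
    convert hc.2.2 using 2; push_cast; module
  have htop := hRS.pairingB_nonneg_of_add_notMem hγ (hc.1 p (by omega) le_rfl)
    (ne_neg_of_notMem_span_singleton (add_smul_notMem_span_singleton hβ _)) hp_add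
  have hbot := hRS.pairingB_nonpos_of_sub_notMem hγ hm
    (ne_of_notMem_span_singleton (add_smul_notMem_span_singleton hβ _)) hm_sub
  rw [pairingB_add_smul_left hγγ] at htop hbot
  have : ((p : ℤ) : ℚ) < m := by exact_mod_cast hpm
  linarith

lemma le_of_rootChain (hc : RootChain Φ γ β p q) (hc' : RootChain Φ γ β p' q') : p ≤ p' := by
  exact_mod_cast hc'.le_of_mem hRS hγ hβ (hc.1 p (by omega) le_rfl)

lemma unique (hc : RootChain Φ γ β p q) (hc' : RootChain Φ γ β p' q') : p = p' ∧ q = q' := by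
  have hβ' : β ∉ ℚ ∙ (-γ) := by rwa [span_singleton_neg_eq]
  have hγ' := hRS.neg_mem hγ
  exact ⟨(hc.le_of_rootChain hRS hγ hβ hc').antisymm (hc'.le_of_rootChain hRS hγ hβ hc),
    (hc.neg.le_of_rootChain hRS hγ' hβ' hc'.neg).antisymm
      (hc'.neg.le_of_rootChain hRS hγ' hβ' hc.neg)⟩

lemma pairingB_le (hc : RootChain Φ γ β p q) : pairingB B β γ ≤ q - p := by
  obtain ⟨n, hn⟩ := hRS.cryst γ hγ β hc.mem
  have hrefl := hRS.reflMem γ hγ _ (hc.1 p (by omega) le_rfl)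
  rw [pairingB_add_smul_left (hRS.apply_self_pos hγ).ne', hn] at hrefl
  have := hc.neg.le_of_mem hRS (hRS.neg_mem hγ) (by rwa [span_singleton_neg_eq]) (k := n + p)
    (by convert hrefl using 1; push_cast; module)
  rw [hn]
  have : (n : ℚ) + p ≤ q := by exact_mod_cast this
  linarith

lemma pairingB_eq (hc : RootChain Φ γ β p q) : pairingB B β γ = q - p := by
  have := hc.neg.pairingB_le hRS (hRS.neg_mem hγ) (by rwa [span_singleton_neg_eq])
  rw [pairingB_neg_right] at this
  linarith [hc.pairingB_le hRS hγ hβ]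

lemma lengths_eq (hc : RootChain Φ γ β p q) {mp mm : E → ℕ}
    (hm : ∀ α ∈ Φ, α ≠ γ → α ≠ -γ →
      ∃ p q : ℕ, RootChain Φ γ α p q ∧ mp α = p + 1 ∧ mm α = q + 1) :
    mp β = p + 1 ∧ mm β = q + 1 := by
  obtain ⟨p', q', hc', hp', hq'⟩ := hm β hc.mem (ne_of_notMem_span_singleton hβ)
    (ne_neg_of_notMem_span_singleton hβ)
  obtain ⟨rfl, rfl⟩ := hc.unique hRS hγ hβ hc'
  exact ⟨hp', hq'⟩

end RootChain

lemma comp_apply_of_rootChain {M : Type*} [AddCommGroup M] [Module ℂ M]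
    (hRS : IsRootSystem B Φ) (hγ : γ ∈ Φ) {T S : M →ₗ[ℂ] M} {v : {x : E // x ∈ Φ} → M}
    {nT nS : E → ℕ}
    (hn : ∀ α ∈ Φ, α ≠ γ → α ≠ -γ →
      ∃ p q : ℕ, RootChain Φ γ α p q ∧ nS α = p + 1 ∧ nT α = q + 1)
    (hT : ∀ (α : {x : E // x ∈ Φ}) (hmem : (α : E) + γ ∈ Φ),
      T (v α) = (nT α : ℂ) • v ⟨α + γ, hmem⟩)
    (hT₀ : ∀ α : {x : E // x ∈ Φ}, (α : E) + γ ∉ Φ → (α : E) ≠ -γ → T (v α) = 0)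
    (hS : ∀ (α : {x : E // x ∈ Φ}) (hmem : (α : E) - γ ∈ Φ),
      S (v α) = (nS α : ℂ) • v ⟨α - γ, hmem⟩)
    {α : {x : E // x ∈ Φ}} (hα : (α : E) ∉ ℚ ∙ γ) {p q : ℕ} (hc : RootChain Φ γ α p q) :
    S (T (v α)) = ((p : ℂ) * (q + 1)) • v α := by
  have hq := (hc.lengths_eq hRS hγ hα hn).2
  cases p with
  | zero =>
    rw [hT₀ α (by simpa using hc.2.2) (ne_neg_of_notMem_span_singleton hα), map_zero]
    simp
  | succ p =>
    have hmem : (α : E) + γ ∈ Φ := by simpa using hc.1 1 (by omega) (by omega)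
    have hα' : (α : E) + γ ∉ ℚ ∙ γ := by simpa using add_smul_notMem_span_singleton hα 1
    have hp := (hc.add_step.lengths_eq hRS hγ hα' hn).1
    rw [hT α hmem, map_smul, hS _ (by simp), hp, hq, smul_smul]
    simp [mul_comm]

theorem e_f_commutator_eq_h
    {I : Type*} [Fintype I]
    (B : E →ₗ[ℚ] E →ₗ[ℚ] ℚ) (Φ : Set E) (hRS : IsRootSystem B Φ)
    (a : I → E) (hbase : IsBase Φ a)
    {M : Type*} [AddCommGroup M] [Module ℂ M]
    (b : Module.Basis (I ⊕ {x : E // x ∈ Φ}) ℂ M)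
    (e f h : I → M →ₗ[ℂ] M) (mp mm : I → E → ℕ)
(hm : ∀ i, ∀ α ∈ Φ, α ≠ a i → α ≠ -a i →
      ∃ p q : ℕ, RootChain Φ (a i) α p q ∧ mp i α = p + 1 ∧ mm i α = q + 1)
(he_u : ∀ i j, e i (b (Sum.inl j)) =
      ((|pairingB B (a i) (a j)| : ℚ) : ℂ) • b (Sum.inr ⟨a i, hbase.mem i⟩))
    (he_v : ∀ i (α : {x : E // x ∈ Φ}) (hmem : (α : E) + a i ∈ Φ),
      e i (b (Sum.inr α)) = ((mm i (α : E) : ℕ) : ℂ) • b (Sum.inr ⟨(α : E) + a i, hmem⟩))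
    (he_neg : ∀ i (α : {x : E // x ∈ Φ}), (α : E) = -a i →
      e i (b (Sum.inr α)) = b (Sum.inl i))
    (he_zero : ∀ i (α : {x : E // x ∈ Φ}), (α : E) + a i ∉ Φ → (α : E) ≠ -a i →
      e i (b (Sum.inr α)) = 0)
    (hf_u : ∀ i j (β : {x : E // x ∈ Φ}), (β : E) = -a i →
      f i (b (Sum.inl j)) = ((|pairingB B (a i) (a j)| : ℚ) : ℂ) • b (Sum.inr β))
    (hf_v : ∀ i (α : {x : E // x ∈ Φ}) (hmem : (α : E) - a i ∈ Φ),
      f i (b (Sum.inr α)) = ((mp i (α : E) : ℕ) : ℂ) • b (Sum.inr ⟨(α : E) - a i, hmem⟩))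
    (hf_pos : ∀ i (α : {x : E // x ∈ Φ}), (α : E) = a i →
      f i (b (Sum.inr α)) = b (Sum.inl i))
    (hf_zero : ∀ i (α : {x : E // x ∈ Φ}), (α : E) - a i ∉ Φ → (α : E) ≠ a i →
      f i (b (Sum.inr α)) = 0)
(hh_u : ∀ i j, h i (b (Sum.inl j)) = 0)
    (hh_v : ∀ i (α : {x : E // x ∈ Φ}),
      h i (b (Sum.inr α)) = ((pairingB B (α : E) (a i) : ℚ) : ℂ) • b (Sum.inr α)) :
    ∀ i, e i ∘ₗ f i - f i ∘ₗ e i = h i := by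
  intro i
  have hai := hbase.mem i
  have hnai := hRS.neg_mem hai
  refine b.ext fun x => ?_
  simp only [LinearMap.sub_apply, LinearMap.comp_apply]
  rcases x with j | ⟨α, hα⟩
  · rw [hf_u i j ⟨-a i, hnai⟩ rfl, map_smul, he_neg i _ rfl, he_u, map_smul, hf_pos i _ rfl,
      hh_u, sub_self]
  by_cases hspan : α ∈ ℚ ∙ a i
  · rcases hRS.eq_or_eq_neg_of_mem_span hai hα hspan with rfl | rfl
    · rw [hf_pos i _ rfl, he_u, he_zero i _ (hRS.add_self_notMem hai) (hRS.ne_neg_self hai),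
        map_zero, hh_v, hRS.pairingB_self_eq_two hai]
      norm_num
    · rw [hf_zero i _ (by simpa [← sub_eq_add_neg] using hRS.add_self_notMem hnai)
        (hRS.ne_neg_self hai).symm, he_neg i _ rfl, hf_u i i ⟨-a i, hnai⟩ rfl, hh_v,
        pairingB_neg_left, hRS.pairingB_self_eq_two hai]
      norm_num
  obtain ⟨p, q, hc, -⟩ := hm i α hα (ne_of_notMem_span_singleton hspan)
    (ne_neg_of_notMem_span_singleton hspan)
  have hfe := comp_apply_of_rootChain hRS hai (hm i) (he_v i) (he_zero i) (hf_v i)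
    (α := ⟨α, hα⟩) hspan hc
  -- `e_i f_i` is `f_i e_i` read along `-α_i`, with the roles of `mp` and `mm` exchanged.
  have hef := comp_apply_of_rootChain hRS hnai (T := f i) (S := e i)
    (fun β hβ h₁ h₂ => by
      obtain ⟨p, q, hc, hp, hq⟩ := hm i β hβ (by simpa using h₂) h₁
      exact ⟨q, p, hc.neg, hq, hp⟩)
    (fun β hmem => by simpa [← sub_eq_add_neg] using hf_v i β (by simpa [sub_eq_add_neg]))
    (fun β h₁ h₂ => hf_zero i β (by simpa [sub_eq_add_neg]) (by simpa using h₂))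
    (fun β hmem => by simpa using he_v i β (by simpa using hmem))
    (α := ⟨α, hα⟩) (by rwa [span_singleton_neg_eq]) hc.neg
  rw [hef, hfe, hh_v, hc.pairingB_eq hRS hai hspan, ← sub_smul]
  congr 1
  push_cast
  ring
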